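/- Thin-classes of chambers in a spherical building are convex: any minimal gallery between two chambers of the same thin-class stays inside that thin-class. -/

import Mathlib

/-- A (simplicial) spherical building, encoded as a simplicial complex on a vertex type
together with a system of finite, thin apartments satisfying the building axioms:
(B0) every face lies in a chamber (a face of maximal cardinality `rank`);
(B1) any two faces lie in a common apartment;
(B2) for any two apartments containing faces `s` and `t` there is an isomorphism between
them fixing `s` and `t` (and all their faces) pointwise.
Sphericity is encoded by the finiteness of the apartments (Coxeter complexes of finite,
i.e. spherical, Coxeter groups). -/
structure SphericalBuilding (V : Type*) where
  faces : Set (Finset V)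
  downClosed : ∀ ⦃s⦄, s ∈ faces → ∀ ⦃t : Finset V⦄, t ⊆ s → t ∈ faces
  rank : ℕ
  rank_pos : 0 < rank
  card_le : ∀ s ∈ faces, s.card ≤ rank
  face_in_chamber : ∀ s ∈ faces, ∃ c ∈ faces, s ⊆ c ∧ c.card = rank
  apartments : Set (Set (Finset V))
  apartments_sub : ∀ A ∈ apartments, A ⊆ faces
  apartments_downClosed : ∀ A ∈ apartments, ∀ ⦃s⦄, s ∈ A → ∀ ⦃t : Finset V⦄, t ⊆ s → t ∈ A
  apartments_finite : ∀ A ∈ apartments, A.Finite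
  /-- each apartment is thin: a panel of `A` lies in exactly two chambers of `A` -/
  apartments_thin : ∀ A ∈ apartments, ∀ p ∈ A, p.card = rank - 1 →
    ∃ c d : Finset V, c ∈ A ∧ d ∈ A ∧ c.card = rank ∧ d.card = rank ∧ c ≠ d ∧
      p ⊆ c ∧ p ⊆ d ∧ ∀ e ∈ A, e.card = rank → p ⊆ e → e = c ∨ e = d
  /-- each apartment is gallery connected -/
  apartments_connected : ∀ A ∈ apartments, ∀ c ∈ A, ∀ d ∈ A,
    c.card = rank → d.card = rank →
    Relation.ReflTransGen (fun a b : Finset V => a ∈ A ∧ b ∈ A ∧ a.card = rank ∧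
      b.card = rank ∧ a ≠ b ∧ ∃ p ∈ A, p.card = rank - 1 ∧ p ⊆ a ∧ p ⊆ b) c d
  pair_in_apartment : ∀ s ∈ faces, ∀ t ∈ faces, ∃ A ∈ apartments, s ∈ A ∧ t ∈ A
  compatible : ∀ A ∈ apartments, ∀ B ∈ apartments, ∀ s t : Finset V,
    s ∈ A → s ∈ B → t ∈ A → t ∈ B →
    ∃ φ : Finset V → Finset V, Set.BijOn φ A B ∧
      (∀ u ∈ A, ∀ w ∈ A, (u ⊆ w ↔ φ u ⊆ φ w)) ∧ (∀ u ∈ A, (φ u).card = u.card) ∧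
      (∀ u ∈ A, (u ⊆ s ∨ u ⊆ t) → φ u = u)

namespace SphericalBuilding

variable {V : Type*} [DecidableEq V] (Δ : SphericalBuilding V)

/-- A chamber is a face of maximal cardinality. -/
def IsChamber (c : Finset V) : Prop := c ∈ Δ.faces ∧ c.card = Δ.rank

/-- A panel is a codimension one face of a chamber. -/
def IsPanel (p : Finset V) : Prop := p ∈ Δ.faces ∧ p.card = Δ.rank - 1

/-- A panel is thick if it is contained in at least three chambers. -/
def IsThickPanel (p : Finset V) : Prop := Δ.IsPanel p ∧
  ∃ c₁ c₂ c₃ : Finset V, Δ.IsChamber c₁ ∧ Δ.IsChamber c₂ ∧ Δ.IsChamber c₃ ∧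
    p ⊆ c₁ ∧ p ⊆ c₂ ∧ p ⊆ c₃ ∧ c₁ ≠ c₂ ∧ c₁ ≠ c₃ ∧ c₂ ≠ c₃

/-- A panel is thin if it is contained in exactly two chambers. -/
def IsThinPanel (p : Finset V) : Prop := Δ.IsPanel p ∧
  ∃ c₁ c₂ : Finset V, Δ.IsChamber c₁ ∧ Δ.IsChamber c₂ ∧ p ⊆ c₁ ∧ p ⊆ c₂ ∧ c₁ ≠ c₂ ∧
    ∀ c, Δ.IsChamber c → p ⊆ c → c = c₁ ∨ c = c₂

/-- Two chambers are thin-adjacent if their intersection is a thin panel. -/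
def ThinAdj (c c' : Finset V) : Prop :=
  Δ.IsChamber c ∧ Δ.IsChamber c' ∧ c ≠ c' ∧ Δ.IsThinPanel (c ∩ c')

/-- Thin-equivalence: two chambers are thin-equivalent if they are joined by a thin
gallery, i.e. a gallery whose consecutive chambers are thin-adjacent. -/
def ThinEquiv : Finset V → Finset V → Prop := Relation.ReflTransGen Δ.ThinAdj

/-- Two chambers are adjacent if their intersection is a panel. -/
def Adj (c c' : Finset V) : Prop :=
  Δ.IsChamber c ∧ Δ.IsChamber c' ∧ c ≠ c' ∧ Δ.IsPanel (c ∩ c')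

/-- A gallery is a sequence of chambers in which consecutive chambers are adjacent. -/
def IsGallery (γ : List (Finset V)) : Prop :=
  (∀ c ∈ γ, Δ.IsChamber c) ∧ γ.Chain' Δ.Adj

end SphericalBuilding


section AuxDD

/-- remove consecutive duplicates -/
private def dd {α : Type*} [DecidableEq α] : List α → List α
  | [] => []
  | [a] => [a]
  | a :: b :: l => if a = b then dd (b :: l) else a :: dd (b :: l)

private theorem dd_head? {α : Type*} [DecidableEq α] : ∀ (l : List α) (a : α),
    (dd (a :: l)).head? = some a
  | [], _ => rfl
  | b :: l, a => by
    rw [dd]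
    split
    · rename_i h; rw [dd_head? l b, h]
    · rfl

private theorem dd_getLast? {α : Type*} [DecidableEq α] : ∀ (l : List α),
    (dd l).getLast? = l.getLast?
  | [] => rfl
  | [a] => rfl
  | a :: b :: l => by
    rw [dd]
    split
    · rw [dd_getLast? (b :: l), List.getLast?_cons_cons]
    · obtain ⟨t, ht⟩ : ∃ t, dd (b :: l) = b :: t := by
        have h := dd_head? l b
        cases hdd : dd (b :: l) with
        | nil => rw [hdd] at h; simp at h
        | cons x t => rw [hdd] at h; simp at h; exact ⟨t, by rw [h]⟩
      rw [ht, List.getLast?_cons_cons, ← ht, dd_getLast? (b :: l), List.getLast?_cons_cons]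

private theorem dd_length {α : Type*} [DecidableEq α] : ∀ (l : List α), (dd l).length ≤ l.length
  | [] => le_refl _
  | [a] => le_refl _
  | a :: b :: l => by
    rw [dd]
    split
    · exact le_trans (dd_length (b :: l)) (Nat.le_succ _)
    · simpa using Nat.succ_le_succ (dd_length (b :: l))

private theorem dd_mem {α : Type*} [DecidableEq α] : ∀ (l : List α) (x : α), x ∈ dd l → x ∈ l
  | [], x, h => h
  | [a], x, h => h
  | a :: b :: l, x, h => by
    rw [dd] at h
    split at h
    · exact List.mem_cons_of_mem a (dd_mem (b :: l) x h)
    · rcases h with _ | h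
      · exact List.mem_cons_self
      · exact List.mem_cons_of_mem a (dd_mem (b :: l) x ‹x ∈ dd (b :: l)›)

private theorem dd_chain {α : Type*} [DecidableEq α] {R : α → α → Prop} : ∀ (l : List α),
    l.Chain' (fun u v => u = v ∨ R u v) → (dd l).Chain' R
  | [], _ => List.isChain_nil
  | [a], _ => List.isChain_singleton a
  | a :: b :: l, h => by
    unfold List.Chain' at h
    rw [List.isChain_cons_cons] at h
    rw [dd]
    split
    · exact dd_chain (b :: l) h.2
    · rename_i hne
      refine List.isChain_cons.mpr ⟨?_, dd_chain (b :: l) h.2⟩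
      intro y hy
      rw [dd_head? l b] at hy
      cases hy
      exact h.1.resolve_left hne

end AuxDD

namespace SphericalBuilding

variable {V : Type*} [DecidableEq V] (Δ : SphericalBuilding V)

/-- intersection of two distinct maximal faces sharing a panel is that panel -/
private theorem inter_eq_panel {n : ℕ} {x y p : Finset V} (hx : x.card = n) (hy : y.card = n)
    (hxy : x ≠ y) (hp : p ⊆ x) (hp' : p ⊆ y) (hpc : p.card = n - 1) : x ∩ y = p := by
  have hsub : p ⊆ x ∩ y := Finset.subset_inter hp hp'
  have hlt : (x ∩ y).card < n := by
    rcases lt_or_ge (x ∩ y).card n with h | h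
    · exact h
    · exfalso
      have hxs : x ∩ y ⊆ x := Finset.inter_subset_left
      have h1 : x ∩ y = x := Finset.eq_of_subset_of_card_le hxs (by omega)
      have h2 : x ⊆ y := by rw [← h1]; exact Finset.inter_subset_right
      exact hxy (Finset.eq_of_subset_of_card_le h2 (by omega))
  have hple : (x ∩ y).card ≤ p.card := by
    have := Finset.card_le_card hsub
    omega
  exact (Finset.eq_of_subset_of_card_le hsub hple).symm

/-- Rigidity: two isomorphisms from an apartment `B` to an apartment `A` that fix
all faces of a chamber `d ∈ B` agree on all faces of `B`. -/
private theorem uniq {A B : Set (Finset V)} (hA : A ∈ Δ.apartments) (hB : B ∈ Δ.apartments)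
    {d : Finset V} (hdB : d ∈ B) (hdc : d.card = Δ.rank)
    (φ ψ : Finset V → Finset V)
    (hφ : Set.BijOn φ B A) (hφiff : ∀ u ∈ B, ∀ w ∈ B, (u ⊆ w ↔ φ u ⊆ φ w))
    (hφcard : ∀ u ∈ B, (φ u).card = u.card) (hφfix : ∀ u ∈ B, u ⊆ d → φ u = u)
    (hψ : Set.BijOn ψ B A) (hψiff : ∀ u ∈ B, ∀ w ∈ B, (u ⊆ w ↔ ψ u ⊆ ψ w))
    (hψcard : ∀ u ∈ B, (ψ u).card = u.card) (hψfix : ∀ u ∈ B, u ⊆ d → ψ u = u) :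
    ∀ x ∈ B, x.card = Δ.rank → ∀ t ⊆ x, φ t = ψ t := by
  intro x hxB hxc
  have hconn := Δ.apartments_connected B hB d hdB x hxB hdc hxc
  clear hxB hxc
  induction hconn with
  | refl =>
    intro t ht
    have htB : t ∈ B := Δ.apartments_downClosed B hB hdB ht
    rw [hφfix t htB ht, hψfix t htB ht]
  | tail hreach hstep ih =>
    rename_i y y'
    obtain ⟨hyB, hy'B, hyc, hy'c, hyne, p, hpB, hpc, hpy, hpy'⟩ := hstep
    have hφψp : φ p = ψ p := ih p hpy
    have hφψy : φ y = ψ y := ih y (subset_refl y)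
    have hφpA : φ p ∈ A := hφ.mapsTo hpB
    have hφpc : (φ p).card = Δ.rank - 1 := by rw [hφcard p hpB]; exact hpc
    obtain ⟨e₁, e₂, he₁, he₂, hce₁, hce₂, hne12, hsub₁, hsub₂, hun⟩ :=
      Δ.apartments_thin A hA (φ p) hφpA hφpc
    have h1 : φ p ⊆ φ y := (hφiff p hpB y hyB).mp hpy
    have h2 : φ p ⊆ φ y' := (hφiff p hpB y' hy'B).mp hpy'
    have h3 : φ p ⊆ ψ y' := by rw [hφψp]; exact (hψiff p hpB y' hy'B).mp hpy'
    have hy_mem := hun (φ y) (hφ.mapsTo hyB) (by rw [hφcard y hyB]; exact hyc) h1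
    have hy'_mem := hun (φ y') (hφ.mapsTo hy'B) (by rw [hφcard y' hy'B]; exact hy'c) h2
    have hψy'_mem := hun (ψ y') (hψ.mapsTo hy'B) (by rw [hψcard y' hy'B]; exact hy'c) h3
    have hφy'ne : φ y' ≠ φ y := fun h => hyne (hφ.injOn hy'B hyB h).symm
    have hψy'ne : ψ y' ≠ φ y := by
      rw [hφψy]; exact fun h => hyne (hψ.injOn hy'B hyB h).symm
    have hkey : φ y' = ψ y' := by
      rcases hy_mem with hy1 | hy1
      · have hφ2 : φ y' = e₂ := by
          rcases hy'_mem with h | h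
          · exact absurd (h.trans hy1.symm) hφy'ne
          · exact h
        have hψ2 : ψ y' = e₂ := by
          rcases hψy'_mem with h | h
          · exact absurd (h.trans hy1.symm) hψy'ne
          · exact h
        rw [hφ2, hψ2]
      · have hφ2 : φ y' = e₁ := by
          rcases hy'_mem with h | h
          · exact h
          · exact absurd (h.trans hy1.symm) hφy'ne
        have hψ2 : ψ y' = e₁ := by
          rcases hψy'_mem with h | h
          · exact h
          · exact absurd (h.trans hy1.symm) hψy'ne
        rw [hφ2, hψ2]
    intro t hty'
    by_cases htp : t ⊆ p
    · exact ih t (htp.trans hpy)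
    · have hrank := Δ.rank_pos
      have hpy'sub : p ⊆ y' := hpy'
      have hcd : (y' \ p).card = 1 := by rw [Finset.card_sdiff_of_subset hpy'sub]; omega
      obtain ⟨v, hv⟩ := Finset.card_eq_one.mp hcd
      have hvt : v ∈ t := by
        obtain ⟨u, hut, hup⟩ := Finset.not_subset.mp htp
        have : u ∈ y' \ p := Finset.mem_sdiff.mpr ⟨hty' hut, hup⟩
        rw [hv] at this
        rw [← Finset.mem_singleton.mp this]; exact hut
      set s := t.erase v with hs
      have hts : t = insert v s := (Finset.insert_erase hvt).symm
      have hsp : s ⊆ p := by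
        intro u hu
        have hut : u ∈ t := Finset.mem_of_mem_erase hu
        have hunv : u ≠ v := Finset.ne_of_mem_erase hu
        have huy' : u ∈ y' := hty' hut
        by_contra hup
        have : u ∈ y' \ p := Finset.mem_sdiff.mpr ⟨huy', hup⟩
        rw [hv] at this
        exact hunv (Finset.mem_singleton.mp this)
      have hφps : φ p ⊆ φ y' := h2
      have hwcd : (φ y' \ φ p).card = 1 := by
        rw [Finset.card_sdiff_of_subset hφps, hφcard y' hy'B, hφcard p hpB]; omega
      obtain ⟨w, hw⟩ := Finset.card_eq_one.mp hwcd
      have hy'union : φ y' = φ p ∪ {w} := by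
        rw [← hw, Finset.union_sdiff_of_subset hφps]
      have htB : t ∈ B := Δ.apartments_downClosed B hB hy'B hty'
      have hsB : s ∈ B := Δ.apartments_downClosed B hB htB (Finset.erase_subset v t)
      have hvs : v ∉ s := Finset.notMem_erase v t
      have hwp : w ∉ φ p := by
        have : w ∈ φ y' \ φ p := by rw [hw]; exact Finset.mem_singleton_self w
        exact (Finset.mem_sdiff.mp this).2
      have hφsp : φ s ⊆ φ p := (hφiff s hsB p hpB).mp hsp
      have hwfs : w ∉ φ s := fun h => hwp (hφsp h)
      have main : ∀ χ : Finset V → Finset V,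
          (∀ u ∈ B, ∀ w' ∈ B, (u ⊆ w' ↔ χ u ⊆ χ w')) → (∀ u ∈ B, (χ u).card = u.card) →
          χ p = φ p → χ y' = φ y' → χ s = φ s → χ t = insert w (φ s) := by
        intro χ hiff hcard hχp hχy' hχs
        have c1 : χ s ⊆ χ t := (hiff s hsB t htB).mp (by rw [hts]; exact Finset.subset_insert v s)
        have c2 : χ t ⊆ χ y' := (hiff t htB y' hy'B).mp hty'
        have c3 : ¬ χ t ⊆ χ p := fun h => htp ((hiff t htB p hpB).mpr h)
        have hwt : w ∈ χ t := by
          rw [hχp] at c3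
          obtain ⟨u, hu, hup⟩ := Finset.not_subset.mp c3
          have : u ∈ φ p ∪ {w} := by rw [← hy'union, ← hχy']; exact c2 hu
          rcases Finset.mem_union.mp this with h | h
          · exact absurd h hup
          · rw [← Finset.mem_singleton.mp h]; exact hu
        have csub : insert w (φ s) ⊆ χ t := by
          rw [← hχs]
          exact Finset.insert_subset hwt c1
        have hcards : (χ t).card ≤ (insert w (φ s)).card := by
          rw [Finset.card_insert_of_notMem hwfs, hφcard s hsB, hcard t htB, hts,
            Finset.card_insert_of_notMem hvs]
        exact (Finset.eq_of_subset_of_card_le csub hcards).symm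
      have hψs : ψ s = φ s := (ih s (hsp.trans hpy)).symm
      rw [main φ hφiff hφcard rfl rfl rfl, main ψ hψiff hψcard hφψp.symm hkey.symm hψs]

end SphericalBuilding

namespace SphericalBuilding

variable {V : Type*} [DecidableEq V] (Δ : SphericalBuilding V)

private theorem mem_getLast?' {α : Type*} : ∀ (l : List α) (a : α), l.getLast? = some a → a ∈ l
  | [], a, h => by simp at h
  | [b], a, h => by
    simp at h
    rw [← h]
    exact List.mem_cons_self
  | b :: c :: l, a, h => by
    rw [List.getLast?_cons_cons] at h
    exact List.mem_cons_of_mem b (mem_getLast?' (c :: l) a h)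

private theorem chamber_of_mem_apartment {A : Set (Finset V)} (hA : A ∈ Δ.apartments)
    {x : Finset V} (hx : x ∈ A) (hc : x.card = Δ.rank) : Δ.IsChamber x :=
  ⟨Δ.apartments_sub A hA hx, hc⟩

/-- Convexity of apartments: a minimal gallery whose endpoints lie in an apartment
stays inside the apartment. -/
private theorem convex {B₀ : Set (Finset V)} (hB₀ : B₀ ∈ Δ.apartments) :
    ∀ γ : List (Finset V), Δ.IsGallery γ → ∀ a b : Finset V,
    γ.head? = some a → γ.getLast? = some b → a ∈ B₀ → b ∈ B₀ →
    (∀ γ' : List (Finset V), Δ.IsGallery γ' → γ'.head? = some a →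
      γ'.getLast? = some b → γ.length ≤ γ'.length) →
    ∀ x ∈ γ, x ∈ B₀ := by
  intro γ
  induction γ with
  | nil => intro _ a b hh; simp at hh
  | cons a0 rest ih =>
    intro hγ a b hh hl haB hbB hmin x hx
    have ha0 : a = a0 := by symm; simpa using hh
    subst ha0
    rcases List.mem_cons.mp hx with rfl | hx
    · exact haB
    cases rest with
    | nil => simp at hx
    | cons a₁ rest' =>
      have hch := hγ.2
      unfold List.Chain' at hch
      rw [List.isChain_cons_cons] at hch
      obtain ⟨hAdj, hch'⟩ := hch
      obtain ⟨hcha, hcha₁, hnea, hpanel⟩ := hAdj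
      by_cases ha₁B : a₁ ∈ B₀
      · -- recurse on the tail
        have hrestgal : Δ.IsGallery (a₁ :: rest') :=
          ⟨fun z hz => hγ.1 z (List.mem_cons_of_mem a hz), hch'⟩
        have hlrest : (a₁ :: rest').getLast? = some b := by
          rw [← List.getLast?_cons_cons (a := a)]; exact hl
        have hminrest : ∀ γ' : List (Finset V), Δ.IsGallery γ' → γ'.head? = some a₁ →
            γ'.getLast? = some b → (a₁ :: rest').length ≤ γ'.length := by
          intro δ hδ hδh hδl
          have hδne : δ ≠ [] := by intro h; rw [h] at hδh; simp at hδh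
          have hgal : Δ.IsGallery (a :: δ) := by
            constructor
            · intro z hz
              rcases List.mem_cons.mp hz with rfl | hz
              · exact hcha
              · exact hδ.1 z hz
            · refine List.isChain_cons.mpr ⟨?_, hδ.2⟩
              intro y hy
              rw [hδh] at hy
              cases hy
              exact ⟨hcha, hcha₁, hnea, hpanel⟩
          have hlast : (a :: δ).getLast? = some b := by
            cases δ with
            | nil => exact absurd rfl hδne
            | cons z zs => rw [List.getLast?_cons_cons]; exact hδl
          have h := hmin (a :: δ) hgal rfl hlast
          simp only [List.length_cons] at h ⊢
          omega
        exact ih hrestgal a₁ b rfl hlrest ha₁B hbB hminrest x hx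
      · -- a₁ outside B₀: build a shorter gallery, contradiction with minimality
        exfalso
        have hpB₀ : a ∩ a₁ ∈ B₀ := Δ.apartments_downClosed B₀ hB₀ haB Finset.inter_subset_left
        obtain ⟨e₁, e₂, he₁, he₂, hce₁, hce₂, hne12, hpe₁, hpe₂, hthin⟩ :=
          Δ.apartments_thin B₀ hB₀ (a ∩ a₁) hpB₀ hpanel.2
        have haE := hthin a haB hcha.2 Finset.inter_subset_left
        obtain ⟨d, hdB, hdc, hpd, hdnea, huniq2⟩ :
            ∃ d, d ∈ B₀ ∧ d.card = Δ.rank ∧ a ∩ a₁ ⊆ d ∧ d ≠ a ∧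
              (∀ e ∈ B₀, e.card = Δ.rank → a ∩ a₁ ⊆ e → e = a ∨ e = d) := by
          rcases haE with h | h
          · subst h
            exact ⟨e₂, he₂, hce₂, hpe₂, fun he => hne12 he.symm, hthin⟩
          · subst h
            exact ⟨e₁, he₁, hce₁, hpe₁, hne12, fun e heB hec hpe => (hthin e heB hec hpe).symm⟩
        have hdch : Δ.IsChamber d := chamber_of_mem_apartment Δ hB₀ hdB hdc
        -- retraction onto B₀ centred at d
        have Hσ : ∀ z : Finset V, ∃ (Bz : Set (Finset V)) (φ : Finset V → Finset V),
            Δ.IsChamber z → (Bz ∈ Δ.apartments ∧ d ∈ Bz ∧ z ∈ Bz ∧ Set.BijOn φ Bz B₀ ∧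
              (∀ u ∈ Bz, ∀ w ∈ Bz, (u ⊆ w ↔ φ u ⊆ φ w)) ∧ (∀ u ∈ Bz, (φ u).card = u.card) ∧
              (∀ u ∈ Bz, u ⊆ d → φ u = u) ∧ (z ∈ B₀ → φ z = z)) := by
          intro z
          by_cases hz : Δ.IsChamber z ∧ z ∉ B₀
          · obtain ⟨B', hB', hdB', hzB'⟩ := Δ.pair_in_apartment d hdch.1 z hz.1.1
            obtain ⟨φ, hbij, hiff, hcard, hfix⟩ :=
              Δ.compatible B' hB' B₀ hB₀ d d hdB' hdB hdB' hdB
            exact ⟨B', φ, fun _ => ⟨hB', hdB', hzB', hbij, hiff, hcard,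
              fun u hu hud => hfix u hu (Or.inl hud), fun hzB => absurd hzB hz.2⟩⟩
          · refine ⟨B₀, id, fun hchz => ?_⟩
            have hzB : z ∈ B₀ := by
              by_contra hzB
              exact hz ⟨hchz, hzB⟩
            exact ⟨hB₀, hdB, hzB, Set.bijOn_id B₀, fun u _ w _ => Iff.rfl,
              fun u _ => rfl, fun u _ _ => rfl, fun _ => rfl⟩
        choose Bz φz hσ using Hσ
        -- coherence of the chosen isomorphisms on a common panel
        have hcoh : ∀ x' y' : Finset V, Δ.Adj x' y' → φz x' (x' ∩ y') = φz y' (x' ∩ y') := by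
          intro x' y' hadj
          obtain ⟨hcx, hcy, hnxy, hpq⟩ := hadj
          obtain ⟨hBx, hdBx, hxBx, hbijx, hiffx, hcardx, hfixx, _⟩ := hσ x' hcx
          obtain ⟨hBy, hdBy, hyBy, hbijy, hiffy, hcardy, hfixy, _⟩ := hσ y' hcy
          have hqBx : x' ∩ y' ∈ Bz x' :=
            Δ.apartments_downClosed _ hBx hxBx Finset.inter_subset_left
          have hqBy : x' ∩ y' ∈ Bz y' :=
            Δ.apartments_downClosed _ hBy hyBy Finset.inter_subset_right
          obtain ⟨θ, hbθ, hiffθ, hcardθ, hfixθ⟩ :=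
            Δ.compatible (Bz x') hBx (Bz y') hBy d (x' ∩ y') hdBx hdBy hqBx hqBy
          have hψbij : Set.BijOn (fun u => φz y' (θ u)) (Bz x') B₀ := hbijy.comp hbθ
          have hψiff : ∀ u ∈ Bz x', ∀ w ∈ Bz x', (u ⊆ w ↔ φz y' (θ u) ⊆ φz y' (θ w)) := by
            intro u hu w hw
            rw [hiffθ u hu w hw]
            exact hiffy (θ u) (hbθ.mapsTo hu) (θ w) (hbθ.mapsTo hw)
          have hψcard : ∀ u ∈ Bz x', (φz y' (θ u)).card = u.card := by
            intro u hu
            rw [hcardy (θ u) (hbθ.mapsTo hu), hcardθ u hu]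
          have hψfix : ∀ u ∈ Bz x', u ⊆ d → φz y' (θ u) = u := by
            intro u hu hud
            have hθu : θ u = u := hfixθ u hu (Or.inl hud)
            rw [hθu]
            exact hfixy u (by rw [← hθu]; exact hbθ.mapsTo hu) hud
          have h := uniq Δ hB₀ hBx hdBx hdc (φz x') (fun u => φz y' (θ u))
            hbijx hiffx hcardx hfixx hψbij hψiff hψcard hψfix x' hxBx hcx.2
            (x' ∩ y') Finset.inter_subset_left
          rw [h]
          show φz y' (θ (x' ∩ y')) = φz y' (x' ∩ y')
          rw [hfixθ (x' ∩ y') hqBx (Or.inr (subset_refl _))]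
        set σ : Finset V → Finset V := fun z => φz z z with hσdef
        have hσmem : ∀ z : Finset V, Δ.IsChamber z → σ z ∈ B₀ ∧ (σ z).card = Δ.rank := by
          intro z hz
          obtain ⟨hBz, hdz, hzz, hbij, hiff, hcard, hfix, _⟩ := hσ z hz
          exact ⟨hbij.mapsTo hzz, (hcard z hzz).trans hz.2⟩
        have hσch : ∀ z, Δ.IsChamber z → Δ.IsChamber (σ z) := fun z hz =>
          chamber_of_mem_apartment Δ hB₀ (hσmem z hz).1 (hσmem z hz).2
        have hσadj : ∀ x' y', Δ.Adj x' y' → σ x' = σ y' ∨ Δ.Adj (σ x') (σ y') := by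
          intro x' y' hadj
          by_cases heq : σ x' = σ y'
          · exact Or.inl heq
          right
          obtain ⟨hcx, hcy, hnxy, hpq⟩ := hadj
          obtain ⟨hBx, hdBx, hxBx, hbijx, hiffx, hcardx, hfixx, _⟩ := hσ x' hcx
          obtain ⟨hBy, hdBy, hyBy, hbijy, hiffy, hcardy, hfixy, _⟩ := hσ y' hcy
          have hqBx : x' ∩ y' ∈ Bz x' :=
            Δ.apartments_downClosed _ hBx hxBx Finset.inter_subset_left
          have hq1 : φz x' (x' ∩ y') ⊆ σ x' := (hiffx _ hqBx x' hxBx).mp Finset.inter_subset_left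
          have hq2 : φz x' (x' ∩ y') ⊆ σ y' := by
            rw [hcoh x' y' ⟨hcx, hcy, hnxy, hpq⟩]
            exact (hiffy _ (Δ.apartments_downClosed _ hBy hyBy Finset.inter_subset_right)
              y' hyBy).mp Finset.inter_subset_right
          have hqc : (φz x' (x' ∩ y')).card = Δ.rank - 1 := by
            rw [hcardx _ hqBx]; exact hpq.2
          have hinter : σ x' ∩ σ y' = φz x' (x' ∩ y') :=
            inter_eq_panel (hσmem x' hcx).2 (hσmem y' hcy).2 heq hq1 hq2 hqc
          refine ⟨hσch x' hcx, hσch y' hcy, heq, ?_⟩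
          rw [hinter]
          exact ⟨Δ.apartments_sub B₀ hB₀ (hbijx.mapsTo hqBx), hqc⟩
        have hσa₁ : σ a₁ = a := by
          obtain ⟨hB1, hdB1, ha₁B1, hbij1, hiff1, hcard1, hfix1, _⟩ := hσ a₁ hcha₁
          have hpB1 : a ∩ a₁ ∈ Bz a₁ :=
            Δ.apartments_downClosed _ hB1 ha₁B1 Finset.inter_subset_right
          have hφp : φz a₁ (a ∩ a₁) = a ∩ a₁ := hfix1 _ hpB1 hpd
          have h1 : a ∩ a₁ ⊆ σ a₁ := by
            rw [← hφp]
            exact (hiff1 _ hpB1 a₁ ha₁B1).mp Finset.inter_subset_right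
          rcases huniq2 (σ a₁) (hσmem a₁ hcha₁).1 (hσmem a₁ hcha₁).2 h1 with h | h
          · exact h
          · exfalso
            have hφd : φz a₁ d = d := hfix1 d hdB1 (subset_refl d)
            have hda : a₁ = d := hbij1.injOn ha₁B1 hdB1 (by rw [hφd]; exact h)
            rw [hda] at ha₁B
            exact ha₁B hdB
        cases rest' with
        | nil =>
          have hl' := hl
          rw [List.getLast?_cons_cons] at hl'
          simp at hl'
          rw [← hl'] at hbB
          exact ha₁B hbB
        | cons a₂ rest'' =>
          have hl' := hl
          rw [List.getLast?_cons_cons] at hl'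
          have hbmem : b ∈ (a₁ :: a₂ :: rest'') := mem_getLast?' _ b hl'
          have hchb : Δ.IsChamber b := hγ.1 b (List.mem_cons_of_mem a hbmem)
          have hσb : σ b = b := by
            obtain ⟨_, _, _, _, _, _, _, hfixb⟩ := hσ b hchb
            exact hfixb hbB
          set L := (a₁ :: a₂ :: rest'').map σ with hL
          have hchain : L.Chain' (fun u v => u = v ∨ Δ.Adj u v) :=
            List.isChain_map_of_isChain σ (fun u v h => hσadj u v h) hch'
          have hgal : Δ.IsGallery (dd L) := by
            constructor
            · intro z hz
              have hzL := dd_mem L z hz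
              rw [hL] at hzL
              obtain ⟨u, hu, rfl⟩ := List.mem_map.mp hzL
              exact hσch u (hγ.1 u (List.mem_cons_of_mem a hu))
            · exact dd_chain L hchain
          have hheadL : (dd L).head? = some a := by
            have : L = σ a₁ :: (a₂ :: rest'').map σ := rfl
            rw [this, dd_head?, hσa₁]
          have hlastL : (dd L).getLast? = some b := by
            rw [dd_getLast?, hL, List.getLast?_map, hl']
            simp only [Option.map_some]
            rw [hσb]
          have h1 := hmin (dd L) hgal hheadL hlastL
          have h2 := dd_length L
          have h3 : L.length = rest''.length + 2 := by rw [hL]; simp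
          have h4 : (a :: a₁ :: a₂ :: rest'').length = rest''.length + 3 := by simp
          omega

private theorem thinAdj_symm {x y : Finset V} (h : Δ.ThinAdj x y) : Δ.ThinAdj y x :=
  ⟨h.2.1, h.1, h.2.2.1.symm, by rw [Finset.inter_comm]; exact h.2.2.2⟩

/-- thin classes are trapped in apartments -/
private theorem trap {B : Set (Finset V)} (hB : B ∈ Δ.apartments) {a v : Finset V}
    (h : Δ.ThinEquiv a v) (haB : a ∈ B) : v ∈ B := by
  induction h with
  | refl => exact haB
  | tail hreach hstep ih =>
    rename_i u v'
    obtain ⟨hu, hv, hne, hthin⟩ := hstep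
    obtain ⟨hip, c₁, c₂, hc₁, hc₂, hpc₁, hpc₂, hne12, hall⟩ := hthin
    have hpB : u ∩ v' ∈ B := Δ.apartments_downClosed B hB ih Finset.inter_subset_left
    obtain ⟨e₁, e₂, he₁B, he₂B, hce₁, hce₂, hnee, hpe₁, hpe₂, hun⟩ :=
      Δ.apartments_thin B hB (u ∩ v') hpB hip.2
    have hv'cases := hall v' hv Finset.inter_subset_right
    have he₁cases := hall e₁ (chamber_of_mem_apartment Δ hB he₁B hce₁) hpe₁
    have he₂cases := hall e₂ (chamber_of_mem_apartment Δ hB he₂B hce₂) hpe₂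
    rcases he₁cases with h1 | h1 <;> rcases he₂cases with h2 | h2 <;>
      rcases hv'cases with h3 | h3 <;>
      first
        | (exfalso; exact hnee (h1.trans h2.symm))
        | (rw [h3, ← h1]; exact he₁B)
        | (rw [h3, ← h2]; exact he₂B)

private theorem step_lemma : ∀ (γ : List (Finset V)) (a c' : Finset V), Δ.IsGallery γ →
    γ.head? = some a → γ.getLast? = some c' → Δ.ThinEquiv a c' →
    (∀ γ' : List (Finset V), Δ.IsGallery γ' → γ'.head? = some a →
      γ'.getLast? = some c' → γ.length ≤ γ'.length) →
    ∀ x ∈ γ, Δ.ThinEquiv a x := by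
  intro γ
  induction γ with
  | nil => intro a c' _ hh; simp at hh
  | cons a0 rest ih =>
    intro a c' hγ hh hl hte hmin x hx
    have ha0 : a = a0 := by symm; simpa using hh
    subst ha0
    rcases List.mem_cons.mp hx with rfl | hx
    · exact Relation.ReflTransGen.refl
    cases rest with
    | nil => simp at hx
    | cons a₁ rest' =>
      have hch := hγ.2
      unfold List.Chain' at hch
      rw [List.isChain_cons_cons] at hch
      obtain ⟨hAdj, hch'⟩ := hch
      obtain ⟨hcha, hcha₁, hnea, hpanel⟩ := hAdj
      have hthinp : ∀ z, Δ.IsChamber z → a ∩ a₁ ⊆ z → z = a ∨ z = a₁ := by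
        intro z hz hpz
        by_contra hcon
        push_neg at hcon
        obtain ⟨B, hB, haB, hzB⟩ := Δ.pair_in_apartment a hcha.1 z hz.1
        have hc'B : c' ∈ B := trap Δ hB hte haB
        have hallB := convex Δ hB (a :: a₁ :: rest') hγ a c' rfl hl haB hc'B hmin
        have ha₁B : a₁ ∈ B := hallB a₁ (by simp)
        have hpB : a ∩ a₁ ∈ B := Δ.apartments_downClosed B hB haB Finset.inter_subset_left
        obtain ⟨e₁, e₂, he₁B, he₂B, hce₁, hce₂, hnee, hpe₁, hpe₂, hun⟩ :=
          Δ.apartments_thin B hB (a ∩ a₁) hpB hpanel.2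
        have h1 := hun a haB hcha.2 Finset.inter_subset_left
        have h2 := hun a₁ ha₁B hcha₁.2 Finset.inter_subset_right
        have h3 := hun z hzB hz.2 hpz
        rcases h1 with h1 | h1 <;> rcases h2 with h2 | h2 <;> rcases h3 with h3 | h3 <;>
          first
            | exact hnea (h1.trans h2.symm)
            | exact hcon.1 (h3.trans h1.symm)
            | exact hcon.2 (h3.trans h2.symm)
      have hTadj : Δ.ThinAdj a a₁ :=
        ⟨hcha, hcha₁, hnea, hpanel, a, a₁, hcha, hcha₁,
          Finset.inter_subset_left, Finset.inter_subset_right, hnea, hthinp⟩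
      have hte₁ : Δ.ThinEquiv a₁ c' :=
        Relation.ReflTransGen.trans
          (Relation.ReflTransGen.single (thinAdj_symm Δ hTadj)) hte
      have hrestgal : Δ.IsGallery (a₁ :: rest') :=
        ⟨fun z hz => hγ.1 z (List.mem_cons_of_mem a hz), hch'⟩
      have hlrest : (a₁ :: rest').getLast? = some c' := by
        rw [← List.getLast?_cons_cons (a := a)]; exact hl
      have hminrest : ∀ γ' : List (Finset V), Δ.IsGallery γ' → γ'.head? = some a₁ →
          γ'.getLast? = some c' → (a₁ :: rest').length ≤ γ'.length := by
        intro δ hδ hδh hδl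
        have hδne : δ ≠ [] := by intro h; rw [h] at hδh; simp at hδh
        have hgal : Δ.IsGallery (a :: δ) := by
          constructor
          · intro z hz
            rcases List.mem_cons.mp hz with rfl | hz
            · exact hcha
            · exact hδ.1 z hz
          · refine List.isChain_cons.mpr ⟨?_, hδ.2⟩
            intro y hy
            rw [hδh] at hy
            cases hy
            exact ⟨hcha, hcha₁, hnea, hpanel⟩
        have hlast : (a :: δ).getLast? = some c' := by
          cases δ with
          | nil => exact absurd rfl hδne
          | cons z zs => rw [List.getLast?_cons_cons]; exact hδl
        have h := hmin (a :: δ) hgal rfl hlast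
        simp only [List.length_cons] at h ⊢
        omega
      have hall := ih a₁ c' hrestgal rfl hlrest hte₁ hminrest x hx
      exact Relation.ReflTransGen.trans (Relation.ReflTransGen.single hTadj) hall

end SphericalBuilding

/-- Thin-classes of chambers in a spherical building are convex: any minimal
gallery between two chambers of the same thin-class stays inside that thin-class. -/
theorem thin_classes_convex {V : Type*} [DecidableEq V] (Δ : SphericalBuilding V)
    (c c' : Finset V) (hc : Δ.IsChamber c) (hc' : Δ.IsChamber c')
    (hclass : Δ.ThinEquiv c c')
    (γ : List (Finset V)) (hγ : Δ.IsGallery γ)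
    (hhead : γ.head? = some c) (hlast : γ.getLast? = some c')
    -- `γ` is minimal among galleries from `c` to `c'`:
    (hmin : ∀ γ' : List (Finset V), Δ.IsGallery γ' → γ'.head? = some c →
      γ'.getLast? = some c' → γ.length ≤ γ'.length) :
    ∀ d ∈ γ, Δ.ThinEquiv c d := by
  intro d hd
  exact SphericalBuilding.step_lemma Δ γ c c' hγ hhead hlast hclass hmin d hd
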